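/- Let Φ be a prime pure Horn CNF representing a pure Horn function h, and let W ⊆ V_h satisfy F_Φ(W) = W. Then the set X(W) := {C ∈ I(h) : Vars(C) ⊆ W} is an exclusive set of clauses of h. -/

import Mathlib

open Finset

/-- A clause, given by its (fin)sets of positive and negative variables. -/
structure Clause (V : Type*) where
  pos : Finset V
  neg : Finset V
deriving DecidableEq

namespace Clause

variable {V : Type*}

/-- A genuine clause: no variable occurs both positively and negatively. -/
def IsClause (C : Clause V) : Prop := Disjoint C.pos C.neg

/-- Evaluation of a clause (as a disjunction of literals) under an assignment. -/
def eval (C : Clause V) (a : V → Bool) : Prop :=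
  (∃ v ∈ C.pos, a v = true) ∨ (∃ v ∈ C.neg, a v = false)

/-- A pure (definite) Horn clause: exactly one positive literal, its head. -/
def IsPureHorn (C : Clause V) : Prop := ∃ v, C.pos = {v}

end Clause

variable {V : Type*}

/-- Conjunction (as a predicate on assignments) of a set of clauses. -/
def evalSet (S : Set (Clause V)) (a : V → Bool) : Prop := ∀ C ∈ S, C.eval a

/-- Conjunction of the clauses of a CNF, i.e. of a finite set of clauses. -/
def evalCNF (Φ : Finset (Clause V)) (a : V → Bool) : Prop := ∀ C ∈ Φ, C.eval a

/-- A CNF represents a Boolean function `h`. -/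
def Represents (Φ : Finset (Clause V)) (h : (V → Bool) → Prop) : Prop :=
  ∀ a, evalCNF Φ a ↔ h a

/-- A pure Horn CNF: all clauses are pure Horn. -/
def IsPureHornCNF (Φ : Finset (Clause V)) : Prop :=
  ∀ C ∈ Φ, C.IsClause ∧ C.IsPureHorn

/-- The forward chaining closure of a set `Q` of variables with respect to the
pure Horn CNF `Φ`: the smallest set containing `Q` such that whenever `Φ` contains
a clause `S → v` with `S` inside the set, also `v` belongs to it. -/
def fcClosure (Φ : Finset (Clause V)) (Q : Set V) : Set V :=
  ⋂₀ {T : Set V | Q ⊆ T ∧ ∀ C ∈ Φ, ∀ v : V, C.pos = {v} → ↑C.neg ⊆ T → v ∈ T}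

/-- `C` is an implicate of `h`: every assignment falsifying `C` falsifies `h`. -/
def Implicate (h : (V → Bool) → Prop) (C : Clause V) : Prop :=
  ∀ a, ¬ C.eval a → ¬ h a

/-- `C` is a prime implicate of `h`: an implicate from which no literal can be
deleted while remaining an implicate. -/
def PrimeImplicate [DecidableEq V] (h : (V → Bool) → Prop) (C : Clause V) : Prop :=
  C.IsClause ∧ Implicate h C ∧
  (∀ v ∈ C.pos, ¬ Implicate h ⟨C.pos.erase v, C.neg⟩) ∧
  (∀ v ∈ C.neg, ¬ Implicate h ⟨C.pos, C.neg.erase v⟩)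

/-- `C₁` and `C₂` are resolvable on `v`: `v` occurs positively in `C₁`, negatively in
`C₂`, and no other variable occurs with opposite signs in them. -/
def Resolvable (C₁ C₂ : Clause V) (v : V) : Prop :=
  v ∈ C₁.pos ∧ v ∈ C₂.neg ∧
  ∀ w, w ≠ v → ¬(w ∈ C₁.pos ∧ w ∈ C₂.neg) ∧ ¬(w ∈ C₁.neg ∧ w ∈ C₂.pos)

/-- The resolvent `R(C₁,C₂) = (C₁ \ {v}) ∪ (C₂ \ {v̄})`. -/
def resolventOf [DecidableEq V] (C₁ C₂ : Clause V) (v : V) : Clause V :=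
  ⟨C₁.pos.erase v ∪ C₂.pos, C₁.neg ∪ C₂.neg.erase v⟩

/-- A set of clauses closed under resolution. -/
def ResClosed [DecidableEq V] (S : Set (Clause V)) : Prop :=
  ∀ C₁ ∈ S, ∀ C₂ ∈ S, ∀ v, Resolvable C₁ C₂ v → resolventOf C₁ C₂ v ∈ S

/-- The resolution closure of a set of clauses. -/
def resClosure [DecidableEq V] (S : Set (Clause V)) : Set (Clause V) :=
  ⋂₀ {T : Set (Clause V) | S ⊆ T ∧ ResClosed T}

/-- `I(h)`: the resolution closure of the set of prime implicates of `h`. -/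
def implSet [DecidableEq V] (h : (V → Bool) → Prop) : Set (Clause V) :=
  resClosure {C | PrimeImplicate h C}

/-- An exclusive set of clauses of `h`. -/
def ExclusiveSet [DecidableEq V] (h : (V → Bool) → Prop) (Xs : Set (Clause V)) : Prop :=
  Xs ⊆ implSet h ∧
  ∀ C₁ ∈ implSet h, ∀ C₂ ∈ implSet h, ∀ v, Resolvable C₁ C₂ v →
    resolventOf C₁ C₂ v ∈ Xs → C₁ ∈ Xs ∧ C₂ ∈ Xs

/-- The set of variables occurring in a CNF. -/
def varsOf [DecidableEq V] (Φ : Finset (Clause V)) : Finset V :=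
  Φ.biUnion fun C => C.pos ∪ C.neg


/-! Every clause of `I(h)` is a pure Horn implicate `S → u`: prime implicates are, because
models of a pure Horn function are closed under meets, and resolution preserves both properties.
If `R(C₁, C₂)` has all its variables in `W`, the only variable of `C₁` or `C₂` that might lie
outside `W` is the resolved variable `v`, the head of `C₁`, whose subgoal lies in `W`. The
indicator of a forward-chaining closed set is a model of `Φ`, hence of `h`, so it satisfies
`C₁` and forces `v ∈ W`. -/

namespace Clause

theorem not_eval_iff {C : Clause V} {a : V → Bool} :
    ¬ C.eval a ↔ (∀ v ∈ C.pos, a v = false) ∧ ∀ v ∈ C.neg, a v = true := by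
  simp [eval]

theorem IsPureHorn.eval_true {C : Clause V} (hC : C.IsPureHorn) : C.eval fun _ => true := by
  obtain ⟨u, hu⟩ := hC
  exact Or.inl ⟨u, by simp [hu], rfl⟩

theorem IsPureHorn.eval_and {C : Clause V} (hC : C.IsPureHorn) {a b : V → Bool}
    (ha : C.eval a) (hb : C.eval b) : C.eval fun x => a x && b x := by
  obtain ⟨u, hu⟩ := hC
  rcases ha with ⟨x, hx, hax⟩ | ⟨x, hx, hax⟩
  · rcases hb with ⟨y, hy, hby⟩ | ⟨y, hy, hby⟩
    · rw [hu, Finset.mem_singleton] at hx hy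
      rw [hx] at hax
      rw [hy] at hby
      exact Or.inl ⟨u, by simp [hu], by simp [hax, hby]⟩
    · exact Or.inr ⟨y, hy, by simp [hby]⟩
  · exact Or.inr ⟨x, hx, by simp [hax]⟩

end Clause

theorem Implicate.eval {h : (V → Bool) → Prop} {C : Clause V} (hC : Implicate h C)
    {a : V → Bool} (ha : h a) : C.eval a :=
  not_not.1 fun hne => hC a hne ha

theorem not_implicate_iff {h : (V → Bool) → Prop} {C : Clause V} :
    ¬ Implicate h C ↔ ∃ a, h a ∧ ¬ C.eval a := by
  simp only [Implicate, not_forall, not_not, exists_prop, and_comm]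

section PureHornFunction

variable {h : (V → Bool) → Prop} {Φ : Finset (Clause V)}

theorem Represents.apply_true (hrep : Represents Φ h) (hPH : IsPureHornCNF Φ) :
    h fun _ => true :=
  (hrep _).1 fun C hC => (hPH C hC).2.eval_true

theorem Represents.apply_and (hrep : Represents Φ h) (hPH : IsPureHornCNF Φ) {a b : V → Bool}
    (ha : h a) (hb : h b) : h fun x => a x && b x :=
  (hrep _).1 fun C hC => (hPH C hC).2.eval_and ((hrep a).2 ha C hC) ((hrep b).2 hb C hC)

/-- Two distinct heads `v ≠ w` of a prime implicate would give models of `h` refuting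
`C` except at `v`, resp. at `w`; their meet is a model of `h` refuting `C`. -/
theorem Represents.isPureHorn_of_primeImplicate [DecidableEq V] (hrep : Represents Φ h)
    (hPH : IsPureHornCNF Φ) {C : Clause V} (hC : PrimeImplicate h C) : C.IsPureHorn := by
  obtain ⟨-, himp, hmin, -⟩ := hC
  have refuting_model : ∀ u ∈ C.pos, ∃ a, h a ∧ (∀ x ∈ C.pos, x ≠ u → a x = false) ∧
      ∀ x ∈ C.neg, a x = true := by
    intro u hu
    obtain ⟨a, ha, hne⟩ := not_implicate_iff.1 (hmin u hu)
    obtain ⟨hpos, hneg⟩ := Clause.not_eval_iff.1 hne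
    exact ⟨a, ha, fun x hx hxu => hpos x (Finset.mem_erase.2 ⟨hxu, hx⟩), hneg⟩
  obtain ⟨v, hv⟩ : C.pos.Nonempty := by
    by_contra hempty
    refine himp _ ?_ (hrep.apply_true hPH)
    simp [Clause.eval, Finset.not_nonempty_iff_eq_empty.1 hempty]
  refine ⟨v, Finset.eq_singleton_iff_unique_mem.2 ⟨hv, fun w hw => ?_⟩⟩
  by_contra hwv
  obtain ⟨a, ha, ha_pos, ha_neg⟩ := refuting_model v hv
  obtain ⟨b, hb, hb_pos, hb_neg⟩ := refuting_model w hw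
  refine himp _ (Clause.not_eval_iff.2 ⟨fun x hx => ?_, fun x hx => ?_⟩) (hrep.apply_and hPH ha hb)
  · by_cases hxv : x = v
    · simp [hb_pos x hx (hxv ▸ Ne.symm hwv)]
    · simp [ha_pos x hx hxv]
  · simp [ha_neg x hx, hb_neg x hx]

end PureHornFunction

section Resolution

variable [DecidableEq V]

theorem Implicate.resolvent {h : (V → Bool) → Prop} {C₁ C₂ : Clause V}
    (h₁ : Implicate h C₁) (h₂ : Implicate h C₂) (v : V) : Implicate h (resolventOf C₁ C₂ v) := by
  intro a hne ha
  obtain ⟨hpos, hneg⟩ := Clause.not_eval_iff.1 hne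
  simp only [resolventOf, Finset.mem_union, Finset.mem_erase] at hpos hneg
  cases hav : a v
  · refine h₁ a (Clause.not_eval_iff.2 ⟨fun x hx => ?_, fun x hx => hneg x (Or.inl hx)⟩) ha
    by_cases hxv : x = v
    · rwa [hxv]
    · exact hpos x (Or.inl ⟨hxv, hx⟩)
  · refine h₂ a (Clause.not_eval_iff.2 ⟨fun x hx => hpos x (Or.inr hx), fun x hx => ?_⟩) ha
    by_cases hxv : x = v
    · rwa [hxv]
    · exact hneg x (Or.inr ⟨hxv, hx⟩)

theorem Clause.IsPureHorn.resolvent {C₁ C₂ : Clause V} {v : V} (h₁ : C₁.IsPureHorn)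
    (hv : v ∈ C₁.pos) (h₂ : C₂.IsPureHorn) : (resolventOf C₁ C₂ v).IsPureHorn := by
  obtain ⟨u, hu⟩ := h₁
  obtain ⟨w, hw⟩ := h₂
  rw [hu, Finset.mem_singleton] at hv
  exact ⟨w, by simp [resolventOf, hu, hv, hw]⟩

theorem left_vars_subset_insert_resolvent (C₁ C₂ : Clause V) (v : V) :
    C₁.pos ∪ C₁.neg ⊆
      insert v ((resolventOf C₁ C₂ v).pos ∪ (resolventOf C₁ C₂ v).neg) := by
  intro x
  simp only [resolventOf, Finset.mem_union, Finset.mem_insert, Finset.mem_erase]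
  tauto

theorem right_vars_subset_insert_resolvent (C₁ C₂ : Clause V) (v : V) :
    C₂.pos ∪ C₂.neg ⊆
      insert v ((resolventOf C₁ C₂ v).pos ∪ (resolventOf C₁ C₂ v).neg) := by
  intro x
  simp only [resolventOf, Finset.mem_union, Finset.mem_insert, Finset.mem_erase]
  tauto

theorem resClosure_subset {S T : Set (Clause V)} (hST : S ⊆ T) (hT : ResClosed T) :
    resClosure S ⊆ T :=
  Set.sInter_subset_of_mem ⟨hST, hT⟩

theorem Represents.implSet_subset {h : (V → Bool) → Prop} {Φ : Finset (Clause V)}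
    (hrep : Represents Φ h) (hPH : IsPureHornCNF Φ) :
    implSet h ⊆ {C | C.IsPureHorn ∧ Implicate h C} :=
  resClosure_subset (fun _ hC => ⟨hrep.isPureHorn_of_primeImplicate hPH hC, hC.2.1⟩)
    fun _ h₁ _ h₂ v hres => ⟨h₁.1.resolvent hres.1 h₂.1, h₁.2.resolvent h₂.2 v⟩

end Resolution

section ForwardChaining

variable {Φ : Finset (Clause V)}

theorem head_mem_fcClosure {Q : Set V} {C : Clause V} (hC : C ∈ Φ) {v : V}
    (hv : C.pos = {v}) (hneg : ↑C.neg ⊆ fcClosure Φ Q) : v ∈ fcClosure Φ Q :=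
  Set.mem_sInter.2 fun _ hT => hT.2 C hC v hv (hneg.trans (Set.sInter_subset_of_mem hT))

theorem evalCNF_decide_mem_of_fcClosure_eq (hPH : IsPureHornCNF Φ) {W : Set V}
    [DecidablePred (· ∈ W)] (hW : fcClosure Φ W = W) : evalCNF Φ fun x => decide (x ∈ W) := by
  intro C hC
  obtain ⟨u, hu⟩ := (hPH C hC).2
  by_cases hneg : ↑C.neg ⊆ W
  · have hu_mem : u ∈ W := hW ▸ head_mem_fcClosure hC hu (hW.symm ▸ hneg)
    exact Or.inl ⟨u, by simp [hu], by simpa using hu_mem⟩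
  · obtain ⟨x, hx, hxW⟩ := Set.not_subset.1 hneg
    exact Or.inr ⟨x, hx, by simpa using hxW⟩

theorem Represents.head_mem_of_fcClosure_eq {h : (V → Bool) → Prop} (hrep : Represents Φ h)
    (hPH : IsPureHornCNF Φ) {W : Set V} (hW : fcClosure Φ W = W) {C : Clause V}
    (hC : Implicate h C) {v : V} (hv : C.pos = {v}) (hneg : ↑C.neg ⊆ W) : v ∈ W := by
  classical
  rcases hC.eval ((hrep _).1 (evalCNF_decide_mem_of_fcClosure_eq hPH hW)) with
    ⟨x, hx, hxW⟩ | ⟨x, hx, hxW⟩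
  · rw [hv, Finset.mem_singleton] at hx
    simpa [hx] using hxW
  · simp [hneg hx] at hxW

end ForwardChaining

theorem fcClosed_vars_exclusive_general {V : Type*} [DecidableEq V]
    (h : (V → Bool) → Prop) (Φ : Finset (Clause V))
    (hPH : IsPureHornCNF Φ)
    (hrep : Represents Φ h)
    (W : Set V) (hW : fcClosure Φ W = W) :
    ExclusiveSet h {C ∈ implSet h | ↑(C.pos ∪ C.neg) ⊆ W} := by
  refine ⟨fun _ hC => hC.1, fun C₁ h₁ C₂ h₂ v hres ⟨_, hR⟩ => ?_⟩
  obtain ⟨⟨u, hu⟩, himp⟩ := hrep.implSet_subset hPH h₁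
  have hvu : v = u := Finset.mem_singleton.1 (hu ▸ hres.1)
  have hv : C₁.pos = {v} := hvu ▸ hu
  have hneg : ↑C₁.neg ⊆ W := fun x hx => hR (by simp [resolventOf, Finset.mem_coe.1 hx])
  have hvW : v ∈ W := hrep.head_mem_of_fcClosure_eq hPH hW himp hv hneg
  have hinsert : ↑(insert v ((resolventOf C₁ C₂ v).pos ∪ (resolventOf C₁ C₂ v).neg)) ⊆ W := by
    rw [Finset.coe_insert]
    exact Set.insert_subset hvW hR
  exact ⟨⟨h₁, (Finset.coe_subset.2 (left_vars_subset_insert_resolvent C₁ C₂ v)).trans hinsert⟩,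
    ⟨h₂, (Finset.coe_subset.2 (right_vars_subset_insert_resolvent C₁ C₂ v)).trans hinsert⟩⟩

/-- Boros et al.. Let `Φ` be a prime pure Horn CNF representing a
pure Horn function `h` and let `W ⊆ V_h` satisfy `F_Φ(W) = W`.  Then
`X(W) = {C ∈ I(h) : Vars(C) ⊆ W}` is an exclusive set of clauses of `h`. -/
theorem fcClosed_vars_exclusive {V : Type*} [DecidableEq V]
    (h : (V → Bool) → Prop) (Φ : Finset (Clause V))
    (hPH : IsPureHornCNF Φ)
    (hprime : ∀ C ∈ Φ, PrimeImplicate h C)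
    (hrep : Represents Φ h)
    (W : Set V) (hW : fcClosure Φ W = W) :
    ExclusiveSet h {C ∈ implSet h | ↑(C.pos ∪ C.neg) ⊆ W} :=
  fcClosed_vars_exclusive_general h Φ hPH hrep W hW
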